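/- arXiv:2409.01285 — 2 statements merged into one kernel-verified Lean document; each statement's English description precedes it below -/
import Mathlib

section
/- Let d ≥ 1, m ≥ 3, s = 2d+3, a ∈ {1,2}, and suppose ℓ = k·s + (−1)^a·2·d·m for some integer k, and j' ∈ {−1, 1}. Then 1 ≤ (|d·(m−1) − (d+a)·(j'+ℓ)| mod s) ≤ 2d+2; in fact (|d·(m−1) − (d+a)·(j'+ℓ)| mod s) lies in {1, 2, 2d+1, 2d+2}. -/
/-!
Modulo `s = 2d + 3` we have `2(d + a) ≡ (-1)^a`, so the twist factor `(d + a)(-1)^a 2d` reduces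
to `d` and the shift `ℓ` contributes `(d + a) ℓ ≡ d m`, cancelling the `d m` of `d (m - 1)`.
What remains is `-d - (d + a) j'`, which is `a` or `3 - a` modulo `s`, hence `1` or `2`; taking
the absolute value can only replace a residue `r` by `s - r`.
-/

section TwistedLabel

variable {d s : ℤ} {a : ℕ}

lemma twist_factor_modEq (hs : s = 2 * d + 3) (ha : a = 1 ∨ a = 2) :
    (d + a) * ((-1) ^ a * 2 * d) ≡ d [ZMOD s] := by
  subst hs
  rcases ha with rfl | rfl
  · exact Int.modEq_iff_dvd.2 ⟨d, by push_cast; ring⟩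
  · exact Int.modEq_iff_dvd.2 ⟨-d, by push_cast; ring⟩

lemma twisted_label_diff_modEq {m ℓ k j' : ℤ} (hs : s = 2 * d + 3) (ha : a = 1 ∨ a = 2)
    (hl : ℓ = k * s + (-1) ^ a * 2 * d * m) :
    d * (m - 1) - (d + a) * (j' + ℓ) ≡ -d - (d + a) * j' [ZMOD s] := by
  have hshift : (d + a) * ℓ ≡ d * m [ZMOD s] :=
    calc (d + a) * ℓ = s * ((d + a) * k) + (d + a) * ((-1) ^ a * 2 * d) * m := by rw [hl]; ring
      _ ≡ 0 + d * m [ZMOD s] :=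
        (Int.modEq_zero_iff_dvd.2 (dvd_mul_right _ _)).add ((twist_factor_modEq hs ha).mul_right m)
      _ = d * m := zero_add _
  calc d * (m - 1) - (d + a) * (j' + ℓ) = d * m - d - (d + a) * j' - (d + a) * ℓ := by ring
    _ ≡ d * m - d - (d + a) * j' - d * m [ZMOD s] := (Int.ModEq.refl _).sub hshift
    _ = -d - (d + a) * j' := by ring

end TwistedLabel

lemma abs_emod_eq_or_of_emod_eq {E s r : ℤ} (h : E % s = r) (hr : 0 < r) (hrs : r < s) :
    |E| % s = r ∨ |E| % s = s - r := by
  rcases abs_choice E with hE | hE <;> rw [hE]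
  · exact .inl h
  · right
    have hdiv := Int.emod_add_mul_ediv E s
    rw [show -E = (s - r) + s * (-(E / s) - 1) by linarith, Int.add_mul_emod_self_left,
      Int.emod_eq_of_lt (by omega) (by omega)]

theorem stmt_14_general (d m s ℓ k j' : ℤ) (a : ℕ) (hd : 1 ≤ d)
    (hs : s = 2 * d + 3) (ha : a = 1 ∨ a = 2)
    (hl : ℓ = k * s + (-1) ^ a * 2 * d * m) (hj : j' = -1 ∨ j' = 1) :
    (1 ≤ |d * (m - 1) - (d + a) * (j' + ℓ)| % s ∧
      |d * (m - 1) - (d + a) * (j' + ℓ)| % s ≤ 2 * d + 2) ∧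
      |d * (m - 1) - (d + a) * (j' + ℓ)| % s ∈ ({1, 2, 2 * d + 1, 2 * d + 2} : Set ℤ) := by
  have hmod := twisted_label_diff_modEq (j' := j') hs ha hl
  generalize d * (m - 1) - (d + a) * (j' + ℓ) = E at hmod ⊢
  have hres : E % s = 1 ∨ E % s = 2 := by
    have ha' : (a : ℤ) = 1 ∨ (a : ℤ) = 2 := by omega
    rcases hj with rfl | rfl
    · rw [hmod, show -d - (d + a) * -1 = a by ring, Int.emod_eq_of_lt (by omega) (by omega)]
      exact ha'
    · rw [hmod, show -d - (d + a) * 1 = (3 - a) + s * (-1) by rw [hs]; ring,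
        Int.add_mul_emod_self_left, Int.emod_eq_of_lt (by omega) (by omega)]
      omega
  simp only [Set.mem_insert_iff, Set.mem_singleton_iff]
  rcases hres with h | h <;>
    rcases abs_emod_eq_or_of_emod_eq h (by omega) (by omega) with h' | h' <;> omega

theorem stmt_14 (d m s ℓ k j' : ℤ) (a : ℕ) (hd : 1 ≤ d) (hm : 3 ≤ m)
    (hs : s = 2 * d + 3) (ha : a = 1 ∨ a = 2)
    (hl : ℓ = k * s + (-1) ^ a * 2 * d * m) (hj : j' = -1 ∨ j' = 1) :
    (1 ≤ |d * (m - 1) - (d + a) * (j' + ℓ)| % s ∧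
      |d * (m - 1) - (d + a) * (j' + ℓ)| % s ≤ 2 * d + 2) ∧
      |d * (m - 1) - (d + a) * (j' + ℓ)| % s ∈ ({1, 2, 2 * d + 1, 2 * d + 2} : Set ℤ) :=
  stmt_14_general d m s ℓ k j' a hd hs ha hl hj
end

section
/- Let d ≥ 1 with 1 ≤ d ≤ 4, m ≥ 3, s = 2d+3, and let n be a positive multiple of s. Suppose ℓ = (k·s + (−1)^a·2·d·m) mod n for some a ∈ {1,2} and integer k. Then λ_1^d(C_m □^{σ_ℓ} C_n) = 2d+2. -/
/-- `f` is an `L(d,1)`-labeling of `G`. -/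
def IsLD1Labeling {V : Type*} (G : SimpleGraph V) (d : ℕ) (f : V → ℕ) : Prop :=
  (∀ u v, G.Adj u v → (d : ℤ) ≤ |(f u : ℤ) - (f v : ℤ)|) ∧
  (∀ u v, G.dist u v = 2 → (1 : ℤ) ≤ |(f u : ℤ) - (f v : ℤ)|)

/-- The span of a labeling. -/
noncomputable def labelSpan {V : Type*} (f : V → ℕ) : ℕ :=
  sSup (Set.range f) - sInf (Set.range f)

/-- `λ₁ᵈ(G)`: the minimum span over all `L(d,1)`-labelings of `G`. -/
noncomputable def lambdaLD1 {V : Type*} (G : SimpleGraph V) (d : ℕ) : ℕ :=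
  sInf {k | ∃ f : V → ℕ, IsLD1Labeling G d f ∧ labelSpan f = k}

/-- The Cartesian graph bundle `C_m □^{σ_ℓ} C_n` with base `C_m`, fibre `C_n`
and cyclic `ℓ`-shift on the edge from `m-1` to `0`.  In every fibre `(i,j)` is
adjacent to `(i, j±1)`; `(i,j)` is adjacent to `(i+1, j)` for `i ≠ m-1`, and
`(m-1, j)` is adjacent to `(0, j+ℓ)`. -/
def cartesianBundle (m n : ℕ) (ℓ : ZMod n) : SimpleGraph (ZMod m × ZMod n) :=
  SimpleGraph.fromRel (fun u v =>
    (v.1 = u.1 ∧ (v.2 = u.2 + 1 ∨ v.2 = u.2 - 1)) ∨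
    (v.1 = u.1 + 1 ∧
      ((u.1 = -1 ∧ v.2 = u.2 + ℓ) ∨ (u.1 ≠ -1 ∧ v.2 = u.2))))

/-!
Lower bound: a vertex `v₀` of minimum label `M` has four neighbours, and an `L(d,1)`-labeling
gives the neighbours of any vertex pairwise distinct labels. If the span were at most `2d+1`,
a neighbour `w` of `v₀` (so `f w ≥ M + d`) with `f w ≤ M + d + 2` would have to fit the four
labels of its own neighbours into `[M, f w - d] ∪ [f w + d, M + 2d + 1]`, which has only three
elements. Hence all four neighbours of `v₀` are labelled in `[M + d + 3, M + 2d + 1]`, which has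
`d - 1 ≤ 3` elements.

Upper bound: label `(i, j)` by `d i + (d + a) j mod s`, `s = 2d + 3`. Fibre edges change the
label by `±(d + a)` and base edges by `±d`; the twisted edge does too, because the choice of `ℓ`
gives `(d + a) ℓ ≡ d m (mod s)`. So the four neighbours of a vertex labelled `x` get the labels
`x + d, …, x + d + 3 (mod s)` in some order: they are pairwise distinct, which settles distance
two, and at circular distance at least `d` from `x`.
-/

open SimpleGraph Function

section LD1Labeling

variable {V : Type*} {G : SimpleGraph V} {d : ℕ} {f : V → ℕ}

lemma SimpleGraph.dist_eq_two_iff {u v : V} :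
    G.dist u v = 2 ↔ u ≠ v ∧ ¬G.Adj u v ∧ (G.commonNeighbors u v).Nonempty := by
  rw [SimpleGraph.dist, ENat.toNat_eq_iff two_ne_zero]
  exact edist_eq_two_iff

lemma IsLD1Labeling.add_le_or_add_le (hf : IsLD1Labeling G d f) {u v : V} (h : G.Adj u v) :
    f u + d ≤ f v ∨ f v + d ≤ f u := by
  have := hf.1 u v h
  rw [le_abs] at this
  omega

lemma IsLD1Labeling.injOn_neighborSet (hf : IsLD1Labeling G d f) (hd : 1 ≤ d) (w : V) :
    Set.InjOn f (G.neighborSet w) := by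
  intro u hu v hv huv
  by_contra hne
  by_cases hadj : G.Adj u v
  · have := hf.add_le_or_add_le hadj
    omega
  · have := hf.2 u v (dist_eq_two_iff.mpr ⟨hne, hadj, w, hu.symm, hv.symm⟩)
    simp [huv] at this

lemma isLD1Labeling_of_injOn_neighborSet
    (hadj : ∀ u v, G.Adj u v → (d : ℤ) ≤ |(f u : ℤ) - f v|)
    (hinj : ∀ w, Set.InjOn f (G.neighborSet w)) : IsLD1Labeling G d f := by
  refine ⟨hadj, fun u v huv => ?_⟩
  obtain ⟨hne, -, w, hwu, hwv⟩ := dist_eq_two_iff.mp huv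
  have : f u ≠ f v := fun h => hne (hinj w hwu.symm hwv.symm h)
  rw [le_abs]
  omega

lemma le_abs_val_sub_val {s : ℕ} [NeZero s] {x y : ZMod s} {e : ℕ} (he : d ≤ e)
    (hes : e + d ≤ s) (h : y = x + e) : (d : ℤ) ≤ |(x.val : ℤ) - y.val| := by
  rcases (show e ≤ s by omega).lt_or_eq with hlt | rfl
  · have hval : (e : ZMod s).val = e := ZMod.val_cast_of_lt hlt
    have hx := x.val_lt
    have hy := y.val_lt
    rw [le_abs]
    subst h
    rcases lt_or_ge (x.val + (e : ZMod s).val) s with hxe | hxe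
    · have := ZMod.val_add_of_lt hxe
      omega
    · have := ZMod.val_add_val_of_le hxe
      omega
  · obtain rfl : d = 0 := by omega
    simp

lemma isLD1Labeling_val {s : ℕ} [NeZero s] (ψ : V → ZMod s)
    (hstep : ∀ u v, G.Adj u v → ∃ e : ℕ, d ≤ e ∧ e + d ≤ s ∧ ψ v = ψ u + e)
    (hinj : ∀ w, Set.InjOn ψ (G.neighborSet w)) : IsLD1Labeling G d (fun v => (ψ v).val) :=
  isLD1Labeling_of_injOn_neighborSet
    (fun u v h => let ⟨_, he, hes, hv⟩ := hstep u v h; le_abs_val_sub_val he hes hv)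
    (fun w => (ZMod.val_injective s).comp_injOn (hinj w))

lemma labelSpan_le {k : ℕ} (h : ∀ v, f v ≤ k) : labelSpan f ≤ k :=
  (Nat.sub_le _ _).trans (csSup_le' (Set.forall_mem_range.2 h))

lemma labelSpan_eq_sub {v₀ v₁ : V} (hmin : ∀ v, f v₀ ≤ f v) (hmax : ∀ v, f v ≤ f v₁) :
    labelSpan f = f v₁ - f v₀ := by
  have hsup : IsGreatest (Set.range f) (f v₁) := ⟨⟨v₁, rfl⟩, Set.forall_mem_range.2 hmax⟩
  have hinf : IsLeast (Set.range f) (f v₀) := ⟨⟨v₀, rfl⟩, Set.forall_mem_range.2 hmin⟩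
  rw [labelSpan, hsup.csSup_eq, hinf.csInf_eq]

lemma lambdaLD1_eq_of_le {k : ℕ} (hex : ∃ f, IsLD1Labeling G d f ∧ labelSpan f ≤ k)
    (hle : ∀ f, IsLD1Labeling G d f → k ≤ labelSpan f) : lambdaLD1 G d = k := by
  obtain ⟨f, hf, hk⟩ := hex
  have hspan : labelSpan f = k := le_antisymm hk (hle f hf)
  exact le_antisymm (Nat.sInf_le ⟨f, hf, hspan⟩)
    (le_csInf ⟨k, f, hf, hspan⟩ fun _ ⟨g, hg, h⟩ => h ▸ hle g hg)

lemma IsLD1Labeling.four_le_card (hf : IsLD1Labeling G d f) (hd : 1 ≤ d) {w : V}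
    (hw : Nonempty (Fin 4 ↪ G.neighborSet w)) {S : Finset ℕ} (hS : ∀ u, G.Adj w u → f u ∈ S) :
    4 ≤ S.card := by
  obtain ⟨e⟩ := hw
  have hinj : Injective (fun i => f (e i)) := fun i j h =>
    e.injective (Subtype.ext (hf.injOn_neighborSet hd w (e i).2 (e j).2 h))
  simpa using Finset.card_le_card_of_injOn (s := Finset.univ) _ (fun i _ => hS _ (e i).2)
    hinj.injOn

theorem IsLD1Labeling.two_mul_add_two_le_labelSpan [Finite V] [Nonempty V]
    (hdeg : ∀ v, Nonempty (Fin 4 ↪ G.neighborSet v)) (hd1 : 1 ≤ d) (hd4 : d ≤ 4)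
    (hf : IsLD1Labeling G d f) : 2 * d + 2 ≤ labelSpan f := by
  obtain ⟨v₀, hmin⟩ := Finite.exists_min f
  obtain ⟨v₁, hmax⟩ := Finite.exists_max f
  rw [labelSpan_eq_sub hmin hmax]
  by_contra! hspan
  have hnbr : ∀ w, G.Adj v₀ w → f v₀ + d + 3 ≤ f w := by
    intro w hw
    have h4 := hf.four_le_card hd1 (hdeg w)
      (S := Finset.Icc (f v₀) (f w - d) ∪ Finset.Icc (f w + d) (f v₁)) fun u hu => by
        have := hf.add_le_or_add_le hu
        have := hmin u
        have := hmax u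
        simp only [Finset.mem_union, Finset.mem_Icc]
        omega
    have hcard := h4.trans (Finset.card_union_le _ _)
    have := hf.add_le_or_add_le hw
    have := hmin w
    simp only [Nat.card_Icc] at hcard
    omega
  have h4 := hf.four_le_card hd1 (hdeg v₀) (S := Finset.Icc (f v₀ + d + 3) (f v₁))
    fun u hu => Finset.mem_Icc.2 ⟨hnbr u hu, hmax u⟩
  rw [Nat.card_Icc] at h4
  omega

end LD1Labeling

lemma ZMod.natCast_ne_zero_of_lt {k q : ℕ} (h0 : 0 < k) (h : k < q) : (k : ZMod q) ≠ 0 := by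
  rw [Ne, ZMod.natCast_eq_zero_iff]
  exact Nat.not_dvd_of_pos_of_lt h0 h

lemma ZMod.val_add_one_of_ne_neg_one {m : ℕ} [NeZero m] {i : ZMod m} (h : i ≠ -1) :
    (i + 1).val = i.val + 1 := by
  have hm : m ≠ 1 := by
    rintro rfl
    exact h (Subsingleton.elim _ _)
  have : Fact (1 < m) := ⟨by have := NeZero.ne m; omega⟩
  rcases lt_or_ge (i.val + 1) m with hlt | hge
  · rw [ZMod.val_add_of_lt (by rwa [ZMod.val_one]), ZMod.val_one]
  · refine absurd (eq_neg_of_add_eq_zero_left ?_) h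
    have hval : i.val + 1 = m := le_antisymm (ZMod.val_lt i) hge
    rw [← ZMod.natCast_zmod_val i, ← Nat.cast_add_one, hval, ZMod.natCast_self]

lemma ZMod.two_mul_add_three_eq_zero {d s : ℕ} (hs : s = 2 * d + 3) :
    (2 * d + 3 : ZMod s) = 0 := by
  subst hs
  exact_mod_cast ZMod.natCast_self _

lemma ZMod.val_neg_one_add_one (m : ℕ) [NeZero m] : (-1 : ZMod m).val + 1 = m := by
  obtain ⟨k, rfl⟩ := Nat.exists_eq_succ_of_ne_zero (NeZero.ne m)
  rw [ZMod.val_neg_one]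

namespace CartesianBundle

variable {m n : ℕ} (ℓ : ZMod n)

def next (v : ZMod m × ZMod n) : ZMod m × ZMod n :=
  (v.1 + 1, if v.1 = -1 then v.2 + ℓ else v.2)

def prev (v : ZMod m × ZMod n) : ZMod m × ZMod n :=
  (v.1 - 1, if v.1 = 0 then v.2 - ℓ else v.2)

lemma next_prev (v : ZMod m × ZMod n) : next ℓ (prev ℓ v) = v := by
  by_cases h : v.1 = 0 <;> simp [next, prev, h, Prod.ext_iff]

lemma prev_next (v : ZMod m × ZMod n) : prev ℓ (next ℓ v) = v := by
  by_cases h : v.1 = -1 <;> simp [next, prev, h, add_eq_zero_iff_eq_neg, Prod.ext_iff]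

def nbrs (v : ZMod m × ZMod n) : Fin 4 → ZMod m × ZMod n :=
  ![(v.1, v.2 + 1), (v.1, v.2 - 1), next ℓ v, prev ℓ v]

lemma forward_iff {u v : ZMod m × ZMod n} :
    (v.1 = u.1 + 1 ∧ ((u.1 = -1 ∧ v.2 = u.2 + ℓ) ∨ (u.1 ≠ -1 ∧ v.2 = u.2))) ↔ v = next ℓ u := by
  by_cases h : u.1 = -1 <;> simp [next, Prod.ext_iff, h]

lemma eq_next_iff {u v : ZMod m × ZMod n} : u = next ℓ v ↔ v = prev ℓ u :=
  ⟨fun h => h ▸ (prev_next ℓ v).symm, fun h => h ▸ (next_prev ℓ u).symm⟩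

lemma adj_iff {u v : ZMod m × ZMod n} :
    (cartesianBundle m n ℓ).Adj u v ↔ u ≠ v ∧ ∃ i, v = nbrs ℓ u i := by
  have hfibre (x y : ZMod m × ZMod n) : (y.1 = x.1 ∧ (y.2 = x.2 + 1 ∨ y.2 = x.2 - 1)) ↔
      y = (x.1, x.2 + 1) ∨ y = (x.1, x.2 - 1) := by
    simp [Prod.ext_iff, and_or_left]
  have hswap (x y : ZMod m × ZMod n) : x = (y.1, y.2 + 1) ↔ y = (x.1, x.2 - 1) := by
    constructor <;> rintro rfl <;> simp
  rw [cartesianBundle, fromRel_adj, forward_iff, forward_iff, eq_next_iff (u := u), hfibre,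
    hfibre, hswap u v, ← hswap v u]
  simp only [nbrs, Fin.exists_fin_succ, Matrix.cons_val, Fin.exists_fin_zero]
  tauto

lemma nbrs_injective (hm : 3 ≤ m) (hn : 3 ≤ n) (v : ZMod m × ZMod n) :
    Injective (nbrs ℓ v) := by
  have h1 : (1 : ZMod m) ≠ 0 := by exact_mod_cast ZMod.natCast_ne_zero_of_lt one_pos (by omega)
  have h2 : (2 : ZMod m) ≠ 0 := by exact_mod_cast ZMod.natCast_ne_zero_of_lt two_pos (by omega)
  have h2' : (2 : ZMod n) ≠ 0 := by exact_mod_cast ZMod.natCast_ne_zero_of_lt two_pos (by omega)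
  intro i j h
  fin_cases i <;> fin_cases j <;> first | rfl |
    simp [nbrs, next, prev, Prod.ext_iff, sub_eq_add_neg, eq_neg_iff_add_eq_zero,
      neg_eq_iff_eq_neg, one_add_one_eq_two, h1, h2, h2'] at h

lemma ne_nbrs (hm : 2 ≤ m) (hn : 2 ≤ n) (v : ZMod m × ZMod n) (i : Fin 4) : v ≠ nbrs ℓ v i := by
  have h1 : (1 : ZMod m) ≠ 0 := by exact_mod_cast ZMod.natCast_ne_zero_of_lt one_pos (by omega)
  have h1' : (1 : ZMod n) ≠ 0 := by exact_mod_cast ZMod.natCast_ne_zero_of_lt one_pos (by omega)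
  fin_cases i <;> simp [nbrs, next, prev, Prod.ext_iff, eq_sub_iff_add_eq, h1, h1']

lemma nonempty_embedding_neighborSet (hm : 3 ≤ m) (hn : 3 ≤ n) (v : ZMod m × ZMod n) :
    Nonempty (Fin 4 ↪ (cartesianBundle m n ℓ).neighborSet v) :=
  ⟨⟨fun i => ⟨nbrs ℓ v i, (adj_iff ℓ).2 ⟨ne_nbrs ℓ (by omega) (by omega) v i, i, rfl⟩⟩,
    fun i j h => nbrs_injective ℓ hm hn v (congrArg Subtype.val h)⟩⟩

variable (s d a : ℕ)

def label (v : ZMod m × ZMod n) : ZMod s :=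
  d * v.1.val + (d + a) * ZMod.cast v.2

-- Modulo `s = 2d + 3`, `-(d + a) ≡ d + 3 - a` and `-d ≡ d + 3`.
def step : Fin 4 → ℕ :=
  ![d + a, d + 3 - a, d, d + 3]

variable {s d a}

lemma label_up (hsn : s ∣ n) (v : ZMod m × ZMod n) :
    label s d a (v.1, v.2 + 1) = label s d a v + (d + a) := by
  simp only [label, ZMod.cast_add hsn, ZMod.cast_one hsn]
  ring

lemma label_down (hsn : s ∣ n) (v : ZMod m × ZMod n) :
    label s d a (v.1, v.2 - 1) = label s d a v - (d + a) := by
  have := label_up (d := d) (a := a) hsn (v.1, v.2 - 1)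
  rw [sub_add_cancel] at this
  rw [this]
  ring

-- `htwist` is what makes the twisted edge `(m - 1, j) ~ (0, j + ℓ)` raise the label by `d`, like
-- every other base edge.
lemma label_next [NeZero m] (hsn : s ∣ n)
    (htwist : ((d : ZMod s) + a) * ZMod.cast ℓ = d * m) (v : ZMod m × ZMod n) :
    label s d a (next ℓ v) = label s d a v + d := by
  by_cases h : v.1 = -1
  · have hval := congrArg (Nat.cast : ℕ → ZMod s) (ZMod.val_neg_one_add_one m)
    push_cast at hval
    simp only [label, next, h, if_pos, neg_add_cancel, ZMod.val_zero, ZMod.cast_add hsn]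
    push_cast
    linear_combination htwist - (d : ZMod s) * hval
  · simp only [label, next, h, if_neg, not_false_eq_true, ZMod.val_add_one_of_ne_neg_one h]
    push_cast
    ring

lemma label_prev [NeZero m] (hsn : s ∣ n)
    (htwist : ((d : ZMod s) + a) * ZMod.cast ℓ = d * m) (v : ZMod m × ZMod n) :
    label s d a (prev ℓ v) = label s d a v - d := by
  have := label_next ℓ hsn htwist (prev ℓ v)
  rw [next_prev] at this
  rw [this]
  ring

lemma label_nbrs [NeZero m] (hs : s = 2 * d + 3) (ha : a ≤ 3) (hsn : s ∣ n)
    (htwist : ((d : ZMod s) + a) * ZMod.cast ℓ = d * m) (v : ZMod m × ZMod n) (i : Fin 4) :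
    label s d a (nbrs ℓ v i) = label s d a v + step d a i := by
  have hs0 := ZMod.two_mul_add_three_eq_zero hs
  fin_cases i
  · change label s d a (v.1, v.2 + 1) = _ + ((d + a : ℕ) : ZMod s)
    rw [label_up hsn]
    push_cast
    ring
  · change label s d a (v.1, v.2 - 1) = _ + ((d + 3 - a : ℕ) : ZMod s)
    rw [label_down hsn]
    push_cast [Nat.cast_sub (show a ≤ d + 3 by omega)]
    linear_combination -hs0
  · exact label_next ℓ hsn htwist v
  · change label s d a (prev ℓ v) = _ + ((d + 3 : ℕ) : ZMod s)
    rw [label_prev ℓ hsn htwist]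
    push_cast
    linear_combination -hs0

lemma step_bounds (ha : a ≤ 3) (i : Fin 4) : d ≤ step d a i ∧ step d a i ≤ d + 3 := by
  fin_cases i <;>
    simp only [step, Fin.zero_eta, Fin.mk_one, Fin.reduceFinMk, Matrix.cons_val_zero,
      Matrix.cons_val_one, Matrix.cons_val] <;>
    omega

lemma step_injective (ha0 : 0 < a) (ha3 : a < 3) : Injective (step d a) := by
  intro i j h
  fin_cases i <;> fin_cases j <;> first | rfl |
    (simp only [step, Fin.zero_eta, Fin.mk_one, Fin.reduceFinMk, Matrix.cons_val_zero,
      Matrix.cons_val_one, Matrix.cons_val] at h; omega)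

theorem isLD1Labeling_label [NeZero m] (hd : 1 ≤ d) (hs : s = 2 * d + 3) (ha0 : 0 < a)
    (ha3 : a < 3) (hsn : s ∣ n) (htwist : ((d : ZMod s) + a) * ZMod.cast ℓ = d * m) :
    IsLD1Labeling (cartesianBundle m n ℓ) d (fun v => (label s d a v).val) := by
  have : NeZero s := ⟨by omega⟩
  have hlt (i : Fin 4) : step d a i < s := by
    have := step_bounds (d := d) ha3.le i
    omega
  refine isLD1Labeling_val _ (fun u v huv => ?_) (fun w => ?_)
  · obtain ⟨-, i, rfl⟩ := (adj_iff ℓ).1 huv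
    have := step_bounds (d := d) ha3.le i
    exact ⟨step d a i, this.1, by omega, label_nbrs ℓ hs ha3.le hsn htwist u i⟩
  · rintro _ hu _ hv huv
    obtain ⟨-, i, rfl⟩ := (adj_iff ℓ).1 hu
    obtain ⟨-, j, rfl⟩ := (adj_iff ℓ).1 hv
    rw [label_nbrs ℓ hs ha3.le hsn htwist, label_nbrs ℓ hs ha3.le hsn htwist, add_right_inj]
      at huv
    have := congrArg ZMod.val huv
    rw [ZMod.val_cast_of_lt (hlt i), ZMod.val_cast_of_lt (hlt j)] at this
    rw [step_injective ha0 ha3 this]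

end CartesianBundle

lemma twist_condition_of_eq_emod {d m s n a : ℕ} {k ℓ : ℤ} (hs : s = 2 * d + 3) (hsn : s ∣ n)
    (ha : a = 1 ∨ a = 2) (hl : ℓ = (k * s + (-1) ^ a * 2 * d * m) % n) :
    ((d : ZMod s) + a) * ZMod.cast (ℓ : ZMod n) = d * m := by
  have hs0 := ZMod.two_mul_add_three_eq_zero hs
  rw [ZMod.cast_intCast hsn, hl, Int.emod_def]
  push_cast [(ZMod.natCast_eq_zero_iff n s).2 hsn, ZMod.natCast_self]
  rcases ha with rfl | rfl
  · linear_combination (-(d : ZMod s) * m) * hs0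
  · linear_combination ((d : ZMod s) * m) * hs0

theorem stmt_18 (d m s n : ℕ) (a : ℕ) (k ℓ : ℤ) (c : ℕ)
    (hd1 : 1 ≤ d) (hd4 : d ≤ 4) (hm : 3 ≤ m) (hs : s = 2 * d + 3)
    (hc : 1 ≤ c) (hn : n = c * s)
    (ha : a = 1 ∨ a = 2)
    (hl : ℓ = (k * (s : ℤ) + (-1) ^ a * 2 * (d : ℤ) * (m : ℤ)) % (n : ℤ)) :
    lambdaLD1 (cartesianBundle m n (ℓ : ZMod n)) d = 2 * d + 2 := by
  have hsn : s ∣ n := hn ▸ dvd_mul_left s c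
  have hsn_le : s ≤ n := hn ▸ Nat.le_mul_of_pos_left s hc
  have : NeZero m := ⟨by omega⟩
  have : NeZero n := ⟨by omega⟩
  obtain ⟨ha0, ha3⟩ : 0 < a ∧ a < 3 := by omega
  have hlabel := CartesianBundle.isLD1Labeling_label _ hd1 hs ha0 ha3 hsn
    (twist_condition_of_eq_emod hs hsn ha hl)
  have hdeg := CartesianBundle.nonempty_embedding_neighborSet (ℓ : ZMod n) hm (by omega)
  refine lambdaLD1_eq_of_le ⟨_, hlabel, labelSpan_le fun v => ?_⟩
    fun f hf => hf.two_mul_add_two_le_labelSpan hdeg hd1 hd4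
  have : NeZero s := ⟨by omega⟩
  have := (CartesianBundle.label s d a v).val_lt
  omega
end
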